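/- Let V be a finite-dimensional complex inner product space, φ : V → V self-adjoint, and ν ∈ spec(φ). Then A_ν := ℙ(⊕_{μ∈spec(φ), μ≥ν} V_μ) is an attractor for the projective flow Φ generated by φ, and its dual repellor is A_ν* := ℙ(V) ∖ W⁺(A_ν) = ℙ(⊕_{μ∈spec(φ), μ<ν} V_μ). -/

import Mathlib

open scoped LinearAlgebra.Projectivization
open Filter

variable {V : Type*} [NormedAddCommGroup V] [InnerProductSpace ℂ V] [FiniteDimensional ℂ V]

/-- The quotient topology on complex projective space. -/
noncomputable instance instTopPV : TopologicalSpace (ℙ ℂ V) :=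
  @instTopologicalSpaceQuotient _ (projectivizationSetoid ℂ V) _

theorem exp_toLinearMap_injective (ψ : V →L[ℂ] V) :
    Function.Injective (NormedSpace.exp ψ).toLinearMap := by
  obtain ⟨u, hu⟩ := NormedSpace.isUnit_exp_of_mem_ball (𝕂 := ℝ) (x := ψ)
    ((NormedSpace.expSeries_radius_eq_top ℝ (V →L[ℂ] V)).symm ▸ edist_lt_top _ _)
  intro a b hab
  have h2 : (↑u⁻¹ * ↑u : V →L[ℂ] V) a = (↑u⁻¹ * ↑u : V →L[ℂ] V) b := by
    simp only [ContinuousLinearMap.mul_apply]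
    rw [hu]
    exact congrArg _ hab
  simpa [u.inv_mul] using h2

/-- The projective flow generated by a linear map `φ`: `Φ(t, [v]) = [e^{tφ} v]`. -/
noncomputable def projFlow (φ : V →ₗ[ℂ] V) (t : ℝ) : ℙ ℂ V → ℙ ℂ V :=
  Projectivization.map
    (NormedSpace.exp (t • LinearMap.toContinuousLinearMap φ)).toLinearMap
    (exp_toLinearMap_injective _)

/-- `W⁺(A)`: points whose forward orbit converges to the invariant set `A`
(formulated topologically: the orbit is eventually in every neighborhood of `A`;
on the compact metrizable space `ℙ(V)` this coincides with `dist(Φ(t,x),A) → 0`). -/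
def stableSet {X : Type*} [TopologicalSpace X] (Φ : ℝ → X → X) (A : Set X) : Set X :=
  {x : X | ∀ U ∈ nhdsSet A, ∀ᶠ t : ℝ in atTop, Φ t x ∈ U}

/-- An attractor: a compact invariant set admitting a neighborhood `U` with
`Φ(t, cl U) ⊆ int U` for all `t > 0` and `A = ⋂_{t ≥ 0} Φ(t, U)`. -/
def IsAttractor {X : Type*} [TopologicalSpace X] (Φ : ℝ → X → X) (A : Set X) : Prop :=
  IsCompact A ∧ (∀ t : ℝ, Φ t '' A = A) ∧
    ∃ U : Set X, A ⊆ interior U ∧ (∀ t > (0 : ℝ), Φ t '' closure U ⊆ interior U) ∧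
      A = ⋂ t ∈ Set.Ici (0 : ℝ), Φ t '' U

/-!
Diagonalise `φ` in an eigenbasis `(e_i)` with real eigenvalues `λ_i`, and let `w(x) ∈ [0, 1]` be
the share of the `ℓ¹`-mass of the coordinates of `x` carried by the indices with `λ_i < ν`, so that
`A_ν = {w = 0}` and `A_ν* = {w = 1}`. If `C < ν` bounds the eigenvalues below `ν`, the flow
multiplies those coordinates by at most `e^{tC}` and the others by at least `e^{tν}`, whence
`e^{t(ν - C)} w(Φ_t x) (1 - w(x)) ≤ w(x) (1 - w(Φ_t x))` for `t ≥ 0`. Hence `U = {w < 1/2}` is a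
trapping region whose forward images shrink onto `A_ν`, and `w → 0` along every orbit that starts
off `A_ν*`; an orbit starting in the closed invariant set `A_ν*` never approaches `A_ν`.
-/

open Module

theorem Finite.exists_lt_forall_le_of_lt {ι α : Type*} [Finite ι] [LinearOrder α] [NoMinOrder α]
    (f : ι → α) (a : α) : ∃ c < a, ∀ i, f i < a → f i ≤ c := by
  obtain ⟨c₀, hc₀⟩ := exists_lt a
  obtain ⟨c, hc, hmax⟩ := Set.exists_max_image (insert c₀ (f '' {i | f i < a})) id
    (((Set.toFinite _).image f).insert c₀) ⟨c₀, Or.inl rfl⟩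
  refine ⟨c, ?_, fun i hi => hmax (f i) (Or.inr ⟨i, hi, rfl⟩)⟩
  rcases hc with rfl | ⟨i, hi, rfl⟩
  exacts [hc₀, hi]

theorem notMem_stableSet_of_mapsTo {X : Type*} [TopologicalSpace X] {Φ : ℝ → X → X}
    {A B : Set X} (hB : IsClosed B) (hAB : Disjoint A B) (hinv : ∀ t, Set.MapsTo (Φ t) B B)
    {x : X} (hx : x ∈ B) : x ∉ stableSet Φ A := fun h =>
  let ⟨t, ht⟩ := (h Bᶜ (hB.isOpen_compl.mem_nhdsSet.2 hAB.subset_compl_right)).exists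
  ht (hinv t hx)

theorem mem_stableSet_preimage_zero {X : Type*} [TopologicalSpace X] [CompactSpace X]
    {Φ : ℝ → X → X} {f : X → ℝ} (hf : Continuous f) {x : X}
    (h : Tendsto (fun t => f (Φ t x)) atTop (nhds 0)) : x ∈ stableSet Φ (f ⁻¹' {0}) :=
  (tendsto_comap_iff.2 h).mono_right hf.isClosedMap.comap_nhds_le

theorem tendsto_exp_neg_mul_atTop {r : ℝ} (hr : 0 < r) :
    Tendsto (fun t => Real.exp (-(t * r))) atTop (nhds 0) :=
  Real.tendsto_exp_neg_atTop_nhds_zero.comp (tendsto_id.atTop_mul_const hr)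

section ExpEigen

variable {E : Type*} [NormedAddCommGroup E] [NormedSpace ℂ E] [CompleteSpace E]

theorem ContinuousLinearMap.exp_apply_of_apply_eq_smul {ψ : E →L[ℂ] E} {c : ℂ} {v : E}
    (h : ψ v = c • v) : NormedSpace.exp ψ v = Complex.exp c • v := by
  have hpow : ∀ n : ℕ, (ψ ^ n) v = c ^ n • v := by
    intro n
    induction n with
    | zero => simp
    | succ n ih => rw [pow_succ, mul_apply_eq_comp, h, map_smul, ih, pow_succ', mul_smul]
  have hψ := (NormedSpace.exp_series_hasSum_exp' (𝕂 := ℂ) ψ).mapL (apply ℂ E v)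
  have hc := (NormedSpace.exp_series_hasSum_exp' (𝕂 := ℂ) c).smul_const v
  simp only [apply_apply, smul_apply, hpow, smul_smul] at hψ
  simp only [smul_eq_mul] at hc
  rw [Complex.exp_eq_exp_ℂ]
  exact hψ.unique hc

end ExpEigen

namespace Module.Basis

variable {ι K M : Type*} [CommSemiring K] [AddCommMonoid M] [Module K M]

theorem repr_apply_of_apply_basis_eq_smul (b : Basis ι K M) {ψ : M →ₗ[K] M} {d : ι → K}
    (h : ∀ j, ψ (b j) = d j • b j) (v : M) (i : ι) :
    b.repr (ψ v) i = d i * b.repr v i := by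
  have : b.coord i ∘ₗ ψ = d i • b.coord i := b.ext fun j => by
    rcases eq_or_ne j i with rfl | hji
    · simp [h]
    · simp [h, Finsupp.single_eq_of_ne hji.symm]
  exact LinearMap.congr_fun this v

end Module.Basis

namespace Module.End

variable {ι M : Type*} [AddCommGroup M] [Module ℂ M]

def spectralSubspace (φ : Module.End ℂ M) (P : ℝ → Prop) : Submodule ℂ M :=
  ⨆ μ ∈ {μ : ℝ | φ.HasEigenvalue (μ : ℂ) ∧ P μ}, φ.eigenspace (μ : ℂ)

variable {φ : Module.End ℂ M} {b : Basis ι ℂ M} {eig : ι → ℝ}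

theorem spectralSubspace_eq_span_image (hb : ∀ i, φ (b i) = (eig i : ℂ) • b i) (P : ℝ → Prop) :
    φ.spectralSubspace P = Submodule.span ℂ (b '' {i | P (eig i)}) := by
  apply le_antisymm
  · refine iSup₂_le fun μ hμ w hw => b.mem_span_image.2 fun i hi => ?_
    have hcoord : (eig i : ℂ) * b.repr w i = μ * b.repr w i := by
      rw [← b.repr_apply_of_apply_basis_eq_smul hb, mem_eigenspace_iff.1 hw, map_smul,
        Finsupp.smul_apply, smul_eq_mul]
    have hμi : eig i = μ :=
      Complex.ofReal_injective (mul_right_cancel₀ (Finsupp.mem_support_iff.1 hi) hcoord)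
    exact (hμi ▸ hμ.2 : P (eig i))
  · refine Submodule.span_le.2 ?_
    rintro _ ⟨i, hi, rfl⟩
    have hev : φ.HasEigenvector (eig i) (b i) := ⟨mem_eigenspace_iff.2 (hb i), b.ne_zero i⟩
    exact Submodule.mem_iSup_of_mem (eig i)
      (Submodule.mem_iSup_of_mem ⟨hasEigenvalue_of_hasEigenvector hev, hi⟩ hev.1)

theorem mem_spectralSubspace_iff (hb : ∀ i, φ (b i) = (eig i : ℂ) • b i) {P : ℝ → Prop}
    {v : M} : v ∈ φ.spectralSubspace P ↔ ∀ i, b.repr v i ≠ 0 → P (eig i) := by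
  simp only [spectralSubspace_eq_span_image hb, b.mem_span_image, Set.subset_def,
    Finset.mem_coe, Finsupp.mem_support_iff, Set.mem_ofPred_eq]

end Module.End

namespace Module.Basis

section CoordMass

variable {ι 𝕜 M : Type*} [NormedField 𝕜] [AddCommGroup M] [Module 𝕜 M] (b : Basis ι 𝕜 M)

noncomputable def coordMass (s : Finset ι) (v : M) : ℝ :=
  ∑ i ∈ s, ‖b.repr v i‖

variable (s : Finset ι) (v : M)

theorem coordMass_nonneg : 0 ≤ b.coordMass s v :=
  Finset.sum_nonneg fun _ _ => norm_nonneg _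

theorem coordMass_smul (a : 𝕜) : b.coordMass s (a • v) = ‖a‖ * b.coordMass s v := by
  simp only [coordMass, map_smul, Finsupp.smul_apply, smul_eq_mul, norm_mul, Finset.mul_sum]

theorem coordMass_eq_zero_iff : b.coordMass s v = 0 ↔ ∀ i ∈ s, b.repr v i = 0 := by
  simp only [coordMass, Finset.sum_eq_zero_iff_of_nonneg fun _ _ => norm_nonneg _, norm_eq_zero]

theorem coordMass_add_coordMass_compl [Fintype ι] [DecidableEq ι] :
    b.coordMass s v + b.coordMass sᶜ v = b.coordMass Finset.univ v :=
  Finset.sum_add_sum_compl s _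

theorem coordMass_univ_pos [Fintype ι] {v : M} (hv : v ≠ 0) : 0 < b.coordMass Finset.univ v := by
  refine (b.coordMass_nonneg _ v).lt_of_ne' fun h => hv ?_
  rw [coordMass_eq_zero_iff] at h
  exact b.repr.map_eq_zero_iff.1 (Finsupp.ext fun i => h i (Finset.mem_univ i))

end CoordMass

theorem continuous_coordMass {ι 𝕜 E : Type*} [NontriviallyNormedField 𝕜] [CompleteSpace 𝕜]
    [NormedAddCommGroup E] [NormedSpace 𝕜 E] [FiniteDimensional 𝕜 E] (b : Basis ι 𝕜 E)
    (s : Finset ι) : Continuous (b.coordMass s) :=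
  continuous_finsetSum s fun i _ => ((b.coord i).continuous_of_finiteDimensional).norm

section ExpFlow

variable {ι E : Type*} [NormedAddCommGroup E] [NormedSpace ℂ E] [FiniteDimensional ℂ E]
  {φ : Module.End ℂ E} {b : Basis ι ℂ E} {eig : ι → ℝ}

theorem repr_exp_smul_apply (hb : ∀ i, φ (b i) = (eig i : ℂ) • b i) (t : ℝ) (v : E) (i : ι) :
    b.repr (NormedSpace.exp (t • LinearMap.toContinuousLinearMap φ) v) i =
      Complex.exp (t * eig i) * b.repr v i := by
  refine b.repr_apply_of_apply_basis_eq_smul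
    (ψ := (NormedSpace.exp (t • LinearMap.toContinuousLinearMap φ)).toLinearMap)
    (d := fun j => Complex.exp (t * eig j))
    (fun j => ContinuousLinearMap.exp_apply_of_apply_eq_smul ?_) v i
  rw [FunLike.coe_smul, Pi.smul_apply, LinearMap.coe_toContinuousLinearMap', hb, ← smul_assoc,
    Complex.real_smul]

theorem coordMass_exp_smul (hb : ∀ i, φ (b i) = (eig i : ℂ) • b i) (s : Finset ι) (t : ℝ)
    (v : E) :
    b.coordMass s (NormedSpace.exp (t • LinearMap.toContinuousLinearMap φ) v) =
      ∑ i ∈ s, Real.exp (t * eig i) * ‖b.repr v i‖ := by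
  refine Finset.sum_congr rfl fun i _ => ?_
  rw [repr_exp_smul_apply hb, norm_mul, Complex.norm_exp]
  norm_cast

theorem coordMass_exp_smul_le (hb : ∀ i, φ (b i) = (eig i : ℂ) • b i) {s : Finset ι} {C t : ℝ}
    (hC : ∀ i ∈ s, eig i ≤ C) (ht : 0 ≤ t) (v : E) :
    b.coordMass s (NormedSpace.exp (t • LinearMap.toContinuousLinearMap φ) v) ≤
      Real.exp (t * C) * b.coordMass s v := by
  rw [coordMass_exp_smul hb, coordMass, Finset.mul_sum]
  gcongr with i hi
  exact hC i hi

theorem le_coordMass_exp_smul (hb : ∀ i, φ (b i) = (eig i : ℂ) • b i) {s : Finset ι} {D t : ℝ}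
    (hD : ∀ i ∈ s, D ≤ eig i) (ht : 0 ≤ t) (v : E) :
    Real.exp (t * D) * b.coordMass s v ≤
      b.coordMass s (NormedSpace.exp (t • LinearMap.toContinuousLinearMap φ) v) := by
  rw [coordMass_exp_smul hb, coordMass, Finset.mul_sum]
  gcongr with i hi
  exact hD i hi

theorem coordMass_exp_smul_cross [Fintype ι] [DecidableEq ι]
    (hb : ∀ i, φ (b i) = (eig i : ℂ) • b i) {s : Finset ι} {C D t : ℝ}
    (hC : ∀ i ∈ s, eig i ≤ C) (hD : ∀ i ∉ s, D ≤ eig i) (ht : 0 ≤ t) (v : E) :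
    Real.exp (t * (D - C)) *
        b.coordMass s (NormedSpace.exp (t • LinearMap.toContinuousLinearMap φ) v) *
        b.coordMass sᶜ v ≤
      b.coordMass s v *
        b.coordMass sᶜ (NormedSpace.exp (t • LinearMap.toContinuousLinearMap φ) v) := by
  have hexp : Real.exp (t * (D - C)) * Real.exp (t * C) = Real.exp (t * D) := by
    rw [← Real.exp_add]; ring_nf
  calc _ ≤ Real.exp (t * (D - C)) * (Real.exp (t * C) * b.coordMass s v) * b.coordMass sᶜ v := by
        gcongr
        · exact b.coordMass_nonneg _ v
        · exact coordMass_exp_smul_le hb hC ht v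
    _ = b.coordMass s v * (Real.exp (t * D) * b.coordMass sᶜ v) := by rw [← hexp]; ring
    _ ≤ _ := by
        gcongr
        · exact b.coordMass_nonneg _ v
        · exact le_coordMass_exp_smul hb (fun i hi => hD i (Finset.mem_compl.1 hi)) ht v

end ExpFlow

end Module.Basis

theorem Module.End.exp_smul_mem_spectralSubspace_iff {ι E : Type*} [NormedAddCommGroup E]
    [NormedSpace ℂ E] [FiniteDimensional ℂ E] {φ : Module.End ℂ E} {b : Basis ι ℂ E} {eig : ι → ℝ}
    (hb : ∀ i, φ (b i) = (eig i : ℂ) • b i) (P : ℝ → Prop) (t : ℝ) {v : E} :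
    NormedSpace.exp (t • LinearMap.toContinuousLinearMap φ) v ∈ φ.spectralSubspace P ↔
      v ∈ φ.spectralSubspace P := by
  simp only [mem_spectralSubspace_iff hb, b.repr_exp_smul_apply hb, ne_eq, mul_eq_zero,
    Complex.exp_ne_zero, false_or]

namespace Projectivization

instance : CompactSpace (ℙ ℂ V) := by
  refine Function.Surjective.compactSpace
    (f := fun v : Metric.sphere (0 : V) 1 => mk ℂ v.1 (ne_zero_of_mem_unit_sphere v))
    (continuous_quotient_mk'.comp (continuous_subtype_val.subtype_mk _)) ?_
  refine ind fun v hv => ?_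
  have hnorm : ‖v‖ ≠ 0 := norm_ne_zero_iff.2 hv
  refine ⟨⟨(‖v‖⁻¹ : ℂ) • v, ?_⟩, (mk_eq_mk_iff' ℂ _ _ _ hv).2 ⟨(‖v‖⁻¹ : ℂ), rfl⟩⟩
  rw [mem_sphere_zero_iff_norm, norm_smul, norm_inv, Complex.norm_real, norm_norm,
    inv_mul_cancel₀ hnorm]

end Projectivization

open Projectivization

section ProjFlow

variable (φ : V →ₗ[ℂ] V)

theorem projFlow_mk (t : ℝ) {v : V} (hv : v ≠ 0) :
    projFlow φ t (mk ℂ v hv) =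
      mk ℂ (NormedSpace.exp (t • LinearMap.toContinuousLinearMap φ) v)
        (((exp_toLinearMap_injective _).ne_iff' (map_zero _)).2 hv) :=
  rfl

theorem projFlow_add (s t : ℝ) (x : ℙ ℂ V) :
    projFlow φ (s + t) x = projFlow φ s (projFlow φ t x) := by
  let +nondep : NormedAlgebra ℚ (V →L[ℂ] V) := .restrictScalars ℚ ℂ _
  have hexp := NormedSpace.exp_add_of_commute
    ((Commute.refl (LinearMap.toContinuousLinearMap φ)).smul_left s |>.smul_right t)
  induction x using ind with
  | h v hv => simp only [projFlow_mk, add_smul, hexp, mul_apply_eq_comp]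

theorem projFlow_zero (x : ℙ ℂ V) : projFlow φ 0 x = x := by
  induction x using ind with
  | h v hv => simp only [projFlow_mk, zero_smul, NormedSpace.exp_zero]; rfl

theorem image_projFlow_eq {S : Set (ℙ ℂ V)} (hS : ∀ t x, projFlow φ t x ∈ S ↔ x ∈ S) (t : ℝ) :
    projFlow φ t '' S = S := by
  refine Set.Subset.antisymm (Set.image_subset_iff.2 fun x => (hS t x).2) fun x hx => ?_
  refine ⟨projFlow φ (-t) x, (hS _ _).2 hx, ?_⟩
  rw [← projFlow_add, add_neg_cancel, projFlow_zero]

theorem projFlow_submodule_le_iff {W : Submodule ℂ V}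
    (hW : ∀ (t : ℝ) (v : V), NormedSpace.exp (t • LinearMap.toContinuousLinearMap φ) v ∈ W ↔ v ∈ W)
    (t : ℝ) (x : ℙ ℂ V) : (projFlow φ t x).submodule ≤ W ↔ x.submodule ≤ W := by
  induction x using ind with
  | h v hv =>
    simp only [projFlow_mk, submodule_mk, Submodule.span_singleton_le_iff_mem]
    exact hW t v

end ProjFlow

namespace Module.Basis

section CoordWeight

variable {ι K M : Type*} [Fintype ι] [NormedField K] [AddCommGroup M] [Module K M]
  (b : Basis ι K M) (s : Finset ι)

noncomputable def coordWeight : ℙ K M → ℝ :=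
  Projectivization.lift (fun v => b.coordMass s v / b.coordMass Finset.univ v) <| by
    rintro ⟨_, hv⟩ ⟨w, -⟩ a rfl
    have ha : a ≠ 0 := by rintro rfl; exact hv (zero_smul K w)
    simp only [coordMass_smul, mul_div_mul_left _ _ (norm_ne_zero_iff.2 ha)]

theorem coordWeight_mk {v : M} (hv : v ≠ 0) :
    b.coordWeight s (Projectivization.mk K v hv) = b.coordMass s v / b.coordMass Finset.univ v :=
  rfl

theorem coordWeight_nonneg (x : ℙ K M) : 0 ≤ b.coordWeight s x := by
  induction x using Projectivization.ind with
  | h v hv => exact div_nonneg (b.coordMass_nonneg s v) (b.coordMass_nonneg _ v)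

theorem coordWeight_le_one (x : ℙ K M) : b.coordWeight s x ≤ 1 := by
  induction x using Projectivization.ind with
  | h v hv =>
    exact div_le_one_of_le₀ (Finset.sum_le_sum_of_subset_of_nonneg (Finset.subset_univ s)
      fun _ _ _ => norm_nonneg _) (b.coordMass_nonneg _ v)

theorem one_sub_coordWeight [DecidableEq ι] (x : ℙ K M) :
    1 - b.coordWeight s x = b.coordWeight sᶜ x := by
  induction x using Projectivization.ind with
  | h v hv =>
    rw [coordWeight_mk, coordWeight_mk, ← b.coordMass_add_coordMass_compl s v,
      one_sub_div (b.coordMass_add_coordMass_compl s v ▸ (b.coordMass_univ_pos hv).ne'),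
      add_sub_cancel_left]

theorem coordWeight_mk_eq_zero_iff {v : M} (hv : v ≠ 0) :
    b.coordWeight s (Projectivization.mk K v hv) = 0 ↔ ∀ i ∈ s, b.repr v i = 0 := by
  rw [coordWeight_mk, div_eq_zero_iff, or_iff_left (b.coordMass_univ_pos hv).ne',
    coordMass_eq_zero_iff]

theorem coordWeight_mk_eq_one_iff [DecidableEq ι] {v : M} (hv : v ≠ 0) :
    b.coordWeight s (Projectivization.mk K v hv) = 1 ↔ ∀ i ∉ s, b.repr v i = 0 := by
  rw [← sub_eq_zero, ← neg_eq_zero, neg_sub, one_sub_coordWeight, coordWeight_mk_eq_zero_iff]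
  simp only [Finset.mem_compl]

end CoordWeight

theorem continuous_coordWeight {ι : Type*} [Fintype ι] (b : Basis ι ℂ V) (s : Finset ι) :
    Continuous (b.coordWeight s) :=
  Continuous.quotient_lift
    (((b.continuous_coordMass s).comp continuous_subtype_val).div
      ((b.continuous_coordMass _).comp continuous_subtype_val)
      fun v => (b.coordMass_univ_pos v.2).ne') _

end Module.Basis

section Contraction

variable {ι : Type*} [Fintype ι] [DecidableEq ι] {φ : V →ₗ[ℂ] V} {b : Basis ι ℂ V} {eig : ι → ℝ}
  {s : Finset ι} {C D t : ℝ}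

theorem coordWeight_projFlow_contraction (hb : ∀ i, φ (b i) = (eig i : ℂ) • b i)
    (hC : ∀ i ∈ s, eig i ≤ C) (hD : ∀ i ∉ s, D ≤ eig i) (ht : 0 ≤ t) (x : ℙ ℂ V) :
    Real.exp (t * (D - C)) * b.coordWeight s (projFlow φ t x) * (1 - b.coordWeight s x) ≤
      b.coordWeight s x * (1 - b.coordWeight s (projFlow φ t x)) := by
  induction x using ind with
  | h v hv =>
    simp only [b.one_sub_coordWeight]
    simp only [projFlow_mk, b.coordWeight_mk]
    set u := NormedSpace.exp (t • LinearMap.toContinuousLinearMap φ) v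
    have hu : u ≠ 0 := ((exp_toLinearMap_injective _).ne_iff' (map_zero _)).2 hv
    have hcross := b.coordMass_exp_smul_cross hb hC hD ht v
    have hpos := mul_pos (b.coordMass_univ_pos hu) (b.coordMass_univ_pos hv)
    calc _ = Real.exp (t * (D - C)) * b.coordMass s u * b.coordMass sᶜ v /
          (b.coordMass Finset.univ u * b.coordMass Finset.univ v) := by ring
      _ ≤ b.coordMass s v * b.coordMass sᶜ u /
          (b.coordMass Finset.univ u * b.coordMass Finset.univ v) := by gcongr
      _ = _ := by ring

theorem coordWeight_projFlow_mul_le (hb : ∀ i, φ (b i) = (eig i : ℂ) • b i)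
    (hC : ∀ i ∈ s, eig i ≤ C) (hD : ∀ i ∉ s, D ≤ eig i) (ht : 0 ≤ t) (x : ℙ ℂ V) :
    b.coordWeight s (projFlow φ t x) * (1 - b.coordWeight s x) ≤ Real.exp (-(t * (D - C))) := by
  rw [Real.exp_neg, ← one_div, le_div_iff₀ (Real.exp_pos _)]
  calc _ = Real.exp (t * (D - C)) * b.coordWeight s (projFlow φ t x) * (1 - b.coordWeight s x) := by
        ring
    _ ≤ b.coordWeight s x * (1 - b.coordWeight s (projFlow φ t x)) :=
        coordWeight_projFlow_contraction hb hC hD ht x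
    _ ≤ 1 := mul_le_one₀ (b.coordWeight_le_one s x) (sub_nonneg.2 (b.coordWeight_le_one s _))
        (by linarith [b.coordWeight_nonneg s (projFlow φ t x)])

theorem coordWeight_projFlow_lt_half (hb : ∀ i, φ (b i) = (eig i : ℂ) • b i)
    (hC : ∀ i ∈ s, eig i ≤ C) (hD : ∀ i ∉ s, D ≤ eig i) (hCD : C < D) (ht : 0 < t)
    {x : ℙ ℂ V} (hx : b.coordWeight s x ≤ 1 / 2) : b.coordWeight s (projFlow φ t x) < 1 / 2 := by
  have hcontract := coordWeight_projFlow_contraction hb hC hD ht.le x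
  have hk : 1 < Real.exp (t * (D - C)) := Real.one_lt_exp_iff.2 (mul_pos ht (sub_pos.2 hCD))
  have hy := b.coordWeight_nonneg s (projFlow φ t x)
  have hx0 := b.coordWeight_nonneg s x
  nlinarith [mul_le_mul_of_nonneg_left hk.le hy]

theorem coordWeight_eq_zero_of_forall_mem_image (hb : ∀ i, φ (b i) = (eig i : ℂ) • b i)
    (hC : ∀ i ∈ s, eig i ≤ C) (hD : ∀ i ∉ s, D ≤ eig i) (hCD : C < D) {x : ℙ ℂ V}
    (hx : ∀ t ≥ 0, x ∈ projFlow φ t '' {y | b.coordWeight s y < 1 / 2}) :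
    b.coordWeight s x = 0 := by
  have hlim := (tendsto_exp_neg_mul_atTop (sub_pos.2 hCD)).const_mul 2
  rw [mul_zero] at hlim
  refine le_antisymm (ge_of_tendsto hlim ?_) (b.coordWeight_nonneg s x)
  filter_upwards [eventually_ge_atTop 0] with t ht
  obtain ⟨y, hy, rfl⟩ := hx t ht
  have hdecay := coordWeight_projFlow_mul_le hb hC hD ht y
  have := b.coordWeight_nonneg s (projFlow φ t y)
  nlinarith [hy.out]

theorem tendsto_coordWeight_projFlow (hb : ∀ i, φ (b i) = (eig i : ℂ) • b i)
    (hC : ∀ i ∈ s, eig i ≤ C) (hD : ∀ i ∉ s, D ≤ eig i) (hCD : C < D) {x : ℙ ℂ V}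
    (hx : b.coordWeight s x < 1) :
    Tendsto (fun t => b.coordWeight s (projFlow φ t x)) atTop (nhds 0) := by
  have hbound := ((tendsto_exp_neg_mul_atTop (sub_pos.2 hCD)).div_const (1 - b.coordWeight s x))
  rw [zero_div] at hbound
  refine tendsto_of_tendsto_of_tendsto_of_le_of_le' tendsto_const_nhds hbound
    (Eventually.of_forall fun t => b.coordWeight_nonneg s _) ?_
  filter_upwards [eventually_ge_atTop 0] with t ht
  rw [le_div_iff₀ (sub_pos.2 hx)]
  exact coordWeight_projFlow_mul_le hb hC hD ht x

end Contraction

section SpectralSplitting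

variable {ι M : Type*} [Fintype ι] [AddCommGroup M] [Module ℂ M] {φ : Module.End ℂ M}
  {b : Basis ι ℂ M} {eig : ι → ℝ}

theorem setOf_submodule_le_spectralSubspace_ge (hb : ∀ i, φ (b i) = (eig i : ℂ) • b i)
    (ν : ℝ) : {x : ℙ ℂ M | x.submodule ≤ φ.spectralSubspace (ν ≤ ·)} =
      b.coordWeight (Finset.univ.filter fun i => eig i < ν) ⁻¹' {0} := by
  ext x
  induction x using ind with
  | h v hv =>
    rw [Set.mem_ofPred_eq, submodule_mk, Submodule.span_singleton_le_iff_mem,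
      Module.End.mem_spectralSubspace_iff hb, Set.mem_preimage, Set.mem_singleton_iff,
      b.coordWeight_mk_eq_zero_iff]
    simp only [Finset.mem_filter, Finset.mem_univ, true_and, ← not_lt, not_imp_not]

theorem setOf_submodule_le_spectralSubspace_lt [DecidableEq ι]
    (hb : ∀ i, φ (b i) = (eig i : ℂ) • b i) (ν : ℝ) :
    {x : ℙ ℂ M | x.submodule ≤ φ.spectralSubspace (· < ν)} =
      b.coordWeight (Finset.univ.filter fun i => eig i < ν) ⁻¹' {1} := by
  ext x
  induction x using ind with
  | h v hv =>
    rw [Set.mem_ofPred_eq, submodule_mk, Submodule.span_singleton_le_iff_mem,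
      Module.End.mem_spectralSubspace_iff hb, Set.mem_preimage, Set.mem_singleton_iff,
      b.coordWeight_mk_eq_one_iff]
    simp only [Finset.mem_filter, Finset.mem_univ, true_and, not_imp_comm]

end SpectralSplitting

theorem image_projFlow_spectralSubspace {ι : Type*} {φ : Module.End ℂ V} {b : Basis ι ℂ V}
    {eig : ι → ℝ} (hb : ∀ i, φ (b i) = (eig i : ℂ) • b i) (P : ℝ → Prop) (t : ℝ) :
    projFlow φ t '' {x | x.submodule ≤ φ.spectralSubspace P} =
      {x | x.submodule ≤ φ.spectralSubspace P} :=
  image_projFlow_eq φ (projFlow_submodule_le_iff φ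
    fun t _ => Module.End.exp_smul_mem_spectralSubspace_iff hb P t) t

section AttractorRepellor

variable {ι : Type*} [Fintype ι] {φ : Module.End ℂ V} {b : Basis ι ℂ V} {eig : ι → ℝ}

theorem isAttractor_spectralSubspace_ge (hb : ∀ i, φ (b i) = (eig i : ℂ) • b i) (ν : ℝ) :
    IsAttractor (projFlow φ) {x : ℙ ℂ V | x.submodule ≤ φ.spectralSubspace (ν ≤ ·)} := by
  classical
  set s := Finset.univ.filter fun i => eig i < ν
  obtain ⟨C, hCν, hC⟩ := Finite.exists_lt_forall_le_of_lt eig ν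
  have hCs : ∀ i ∈ s, eig i ≤ C := fun i hi => hC i (Finset.mem_filter.1 hi).2
  have hνs : ∀ i ∉ s, ν ≤ eig i := fun i hi => not_lt.1 fun h => hi (by simp [s, h])
  have hw := b.continuous_coordWeight s
  have hU : IsOpen {x | b.coordWeight s x < 1 / 2} := isOpen_lt hw continuous_const
  have hAU : {x : ℙ ℂ V | x.submodule ≤ φ.spectralSubspace (ν ≤ ·)} ⊆
      {x | b.coordWeight s x < 1 / 2} := by
    rw [setOf_submodule_le_spectralSubspace_ge hb]
    intro x (hx : b.coordWeight s x = 0)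
    norm_num [Set.mem_ofPred_eq, hx]
  refine ⟨?_, image_projFlow_spectralSubspace hb _, _, hU.interior_eq ▸ hAU, fun t ht => ?_, ?_⟩
  · rw [setOf_submodule_le_spectralSubspace_ge hb]
    exact (isClosed_singleton.preimage hw).isCompact
  · rw [hU.interior_eq]
    rintro _ ⟨x, hx, rfl⟩
    exact coordWeight_projFlow_lt_half hb hCs hνs hCν ht
      (closure_lt_subset_le hw continuous_const hx)
  · refine (Set.subset_iInter₂ fun t _ => ?_).antisymm fun x hx => ?_
    · rw [← image_projFlow_spectralSubspace hb _ t]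
      exact Set.image_mono hAU
    · rw [setOf_submodule_le_spectralSubspace_ge hb]
      exact coordWeight_eq_zero_of_forall_mem_image hb hCs hνs hCν (Set.mem_iInter₂.1 hx)

theorem diff_stableSet_spectralSubspace_ge (hb : ∀ i, φ (b i) = (eig i : ℂ) • b i) (ν : ℝ) :
    Set.univ \ stableSet (projFlow φ) {x : ℙ ℂ V | x.submodule ≤ φ.spectralSubspace (ν ≤ ·)} =
      {x : ℙ ℂ V | x.submodule ≤ φ.spectralSubspace (· < ν)} := by
  classical
  set s := Finset.univ.filter fun i => eig i < ν
  obtain ⟨C, hCν, hC⟩ := Finite.exists_lt_forall_le_of_lt eig ν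
  have hCs : ∀ i ∈ s, eig i ≤ C := fun i hi => hC i (Finset.mem_filter.1 hi).2
  have hνs : ∀ i ∉ s, ν ≤ eig i := fun i hi => not_lt.1 fun h => hi (by simp [s, h])
  have hw := b.continuous_coordWeight s
  have hB := setOf_submodule_le_spectralSubspace_lt hb ν
  ext x
  rw [Set.mem_sdiff, and_iff_right (Set.mem_univ x)]
  constructor
  · refine fun hx => of_not_not fun hxB => hx ?_
    rw [setOf_submodule_le_spectralSubspace_ge hb]
    refine mem_stableSet_preimage_zero hw (tendsto_coordWeight_projFlow hb hCs hνs hCν ?_)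
    exact (b.coordWeight_le_one s x).lt_of_ne fun h => hxB (hB ▸ h)
  · refine notMem_stableSet_of_mapsTo ?_ ?_ fun t => ?_
    · exact hB ▸ isClosed_singleton.preimage hw
    · rw [setOf_submodule_le_spectralSubspace_ge hb, hB]
      exact (Set.disjoint_singleton.2 zero_ne_one).preimage _
    · exact Set.mapsTo_iff_image_subset.2 (image_projFlow_spectralSubspace hb _ t).subset

end AttractorRepellor

theorem projFlow_attractor_repellor_pair_general
    {V : Type*} [NormedAddCommGroup V] [InnerProductSpace ℂ V] [FiniteDimensional ℂ V]
    (φ : V →ₗ[ℂ] V) (hφ : LinearMap.IsSymmetric φ)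
    (ν : ℝ) :
    IsAttractor (projFlow φ)
      {x : ℙ ℂ V | Projectivization.submodule x ≤
        ⨆ μ ∈ {μ : ℝ | Module.End.HasEigenvalue φ (μ : ℂ) ∧ ν ≤ μ},
          Module.End.eigenspace φ (μ : ℂ)} ∧
    (Set.univ \ stableSet (projFlow φ)
        {x : ℙ ℂ V | Projectivization.submodule x ≤
          ⨆ μ ∈ {μ : ℝ | Module.End.HasEigenvalue φ (μ : ℂ) ∧ ν ≤ μ},
            Module.End.eigenspace φ (μ : ℂ)})
      = {x : ℙ ℂ V | Projectivization.submodule x ≤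
          ⨆ μ ∈ {μ : ℝ | Module.End.HasEigenvalue φ (μ : ℂ) ∧ μ < ν},
            Module.End.eigenspace φ (μ : ℂ)} := by
  have hb : ∀ i, φ ((hφ.eigenvectorBasis rfl).toBasis i) =
      (hφ.eigenvalues rfl i : ℂ) • (hφ.eigenvectorBasis rfl).toBasis i := fun i => by
    rw [OrthonormalBasis.coe_toBasis]
    exact hφ.apply_eigenvectorBasis rfl i
  exact ⟨isAttractor_spectralSubspace_ge hb ν, diff_stableSet_spectralSubspace_ge hb ν⟩

/-- For a self-adjoint `φ` and `ν ∈ spec(φ)`, the set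
`A_ν = ℙ(⊕_{μ ≥ ν} V_μ)` is an attractor of the projective flow, with dual repellor
`A_ν* = ℙ(V) ∖ W⁺(A_ν) = ℙ(⊕_{μ < ν} V_μ)`. -/
theorem projFlow_attractor_repellor_pair
    {V : Type*} [NormedAddCommGroup V] [InnerProductSpace ℂ V] [FiniteDimensional ℂ V]
    (φ : V →ₗ[ℂ] V) (hφ : LinearMap.IsSymmetric φ)
    (ν : ℝ) (hν : Module.End.HasEigenvalue φ (ν : ℂ)) :
    IsAttractor (projFlow φ)
      {x : ℙ ℂ V | Projectivization.submodule x ≤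
        ⨆ μ ∈ {μ : ℝ | Module.End.HasEigenvalue φ (μ : ℂ) ∧ ν ≤ μ},
          Module.End.eigenspace φ (μ : ℂ)} ∧
    (Set.univ \ stableSet (projFlow φ)
        {x : ℙ ℂ V | Projectivization.submodule x ≤
          ⨆ μ ∈ {μ : ℝ | Module.End.HasEigenvalue φ (μ : ℂ) ∧ ν ≤ μ},
            Module.End.eigenspace φ (μ : ℂ)})
      = {x : ℙ ℂ V | Projectivization.submodule x ≤
          ⨆ μ ∈ {μ : ℝ | Module.End.HasEigenvalue φ (μ : ℂ) ∧ μ < ν},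
            Module.End.eigenspace φ (μ : ℂ)} :=
  projFlow_attractor_repellor_pair_general φ hφ ν
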